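/- arXiv:math/0612529 — 3 statements merged into one kernel-verified Lean document; each statement's English description precedes it below -/
import Mathlib

section
/- Let A be a unital C*-algebra and α ∈ Aut(A) an automorphism satisfying the cyclic Rokhlin property. Then for any unitary w ∈ A, the automorphism (ad w) ∘ α also satisfies the cyclic Rokhlin property. -/
/-!
STATEMENT 6: If an automorphism `α` of a unital C*-algebra has the cyclic Rokhlin
property, then so does `(ad w) ∘ α` for any unitary `w`, where `ad w (a) = w* a w`.
-/

open scoped BigOperators

/-- A projection in a C*-algebra. -/
def IsProjection {A : Type*} [CStarAlgebra A] (p : A) : Prop :=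
  p * p = p ∧ star p = p

/-- The cyclic Rokhlin property for a map `α : A → A`:  for every `k > 0`
(equivalently `k` with `NeZero k`), every `ε > 0` and every finite set `F`, there
are mutually orthogonal projections `e₁, …, e_k` summing to `1`, almost commuting
with `F`, and with `‖α(eᵢ) − e_{i+1}‖ < ε` cyclically. -/
def CyclicRokhlin {A : Type*} [CStarAlgebra A] (α : A → A) : Prop :=
  ∀ (k : ℕ) [NeZero k], ∀ ε : ℝ, 0 < ε → ∀ F : Finset A,
    ∃ e : ZMod k → A,
      (∀ i, IsProjection (e i)) ∧
      (∀ i j, i ≠ j → e i * e j = 0) ∧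
      (∑ i, e i) = 1 ∧
      (∀ x ∈ F, ∀ i, ‖x * e i - e i * x‖ < ε) ∧
      (∀ i, ‖α (e i) - e (i + 1)‖ < ε)

theorem cyclicRokhlin_ad_comp {A : Type*} [CStarAlgebra A] (α : A ≃⋆ₐ[ℂ] A)
    (hα : CyclicRokhlin (α : A → A)) (w : A) (hw : w ∈ unitary A) :
    CyclicRokhlin (fun a => star w * α a * w) := by
  intro k _ ε hε F
  classical
  rcases subsingleton_or_nontrivial A with h | h
  · refine ⟨fun _ => 1, fun i => ⟨Subsingleton.elim _ _, Subsingleton.elim _ _⟩,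
      fun i j _ => Subsingleton.elim _ _, Subsingleton.elim _ _, ?_, ?_⟩
    · intro x _ i
      rw [Subsingleton.elim (x * 1 - 1 * x) 0, norm_zero]; exact hε
    · intro i
      rw [Subsingleton.elim (star w * α 1 * w - 1) 0, norm_zero]; exact hε
  · obtain ⟨e, hproj, horth, hsum, hcomm, hcyc⟩ :=
      hα k (ε / 2) (by positivity) (insert w F)
    refine ⟨e, hproj, horth, hsum, fun x hx i => (hcomm x (Finset.mem_insert_of_mem hx) i).trans (by linarith),
      fun i => ?_⟩
    have hw1 : ‖w‖ = 1 := CStarRing.norm_of_mem_unitary hw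
    have hw' : star w * w = 1 := hw.1
    have hwc : ‖w * e (i + 1) - e (i + 1) * w‖ < ε / 2 :=
      hcomm w (Finset.mem_insert_self w F) (i + 1)
    have key : star w * α (e i) * w - e (i + 1) =
        star w * (α (e i) - e (i + 1)) * w
          + star w * (e (i + 1) * w - w * e (i + 1)) := by
      have h2 : star w * w * e (i + 1) = e (i + 1) := by rw [hw', one_mul]
      calc star w * α (e i) * w - e (i + 1)
          = star w * α (e i) * w - star w * w * e (i + 1) := by rw [h2]
        _ = _ := by noncomm_ring
    rw [key]
    have n1 : ‖star w * (α (e i) - e (i + 1)) * w‖ ≤ ‖α (e i) - e (i + 1)‖ := by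
      calc ‖star w * (α (e i) - e (i + 1)) * w‖
          ≤ ‖star w * (α (e i) - e (i + 1))‖ * ‖w‖ := norm_mul_le _ _
        _ ≤ ‖star w‖ * ‖α (e i) - e (i + 1)‖ * ‖w‖ := by
            gcongr; exact norm_mul_le _ _
        _ = ‖α (e i) - e (i + 1)‖ := by rw [norm_star, hw1]; ring
    have n2 : ‖star w * (e (i + 1) * w - w * e (i + 1))‖ < ε / 2 := by
      calc ‖star w * (e (i + 1) * w - w * e (i + 1))‖
          ≤ ‖star w‖ * ‖e (i + 1) * w - w * e (i + 1)‖ := norm_mul_le _ _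
        _ = ‖w * e (i + 1) - e (i + 1) * w‖ := by
            rw [norm_star, hw1, one_mul, norm_sub_rev]
        _ < ε / 2 := hwc
    calc ‖star w * (α (e i) - e (i + 1)) * w
          + star w * (e (i + 1) * w - w * e (i + 1))‖
        ≤ ‖star w * (α (e i) - e (i + 1)) * w‖
          + ‖star w * (e (i + 1) * w - w * e (i + 1))‖ := norm_add_le _ _
      _ < ε / 2 + ε / 2 := by
          have := hcyc i
          exact add_lt_add (n1.trans_lt this) n2
      _ = ε := by ring
end

section
/- Let A be a unital separable amenable C*-algebra and B a unital C*-algebra. Suppose (φₙ) is a sequence of contractive completely positive maps from A to B with ‖φₙ(ab) − φₙ(a)φₙ(b)‖ → 0 for all a, b ∈ A. Then there exists a map T : A₊ \ {0} → ℕ × ℝ₊ such that (φₙ) is a T-full asymptotic embedding if and only if the induced *-homomorphism π ∘ (φₙ) : A → ℓ^∞({B})/c₀({B}) is full (i.e., for every nonzero a, the image π∘(φₙ)(a) generates the whole algebra as a closed two-sided ideal). -/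
/-!
Given `∑ xᵢ* φₙ(a*a) xᵢ = 1` with `N` terms of norm `≤ R`, asymptotic multiplicativity turns this
into `∑ (xᵢ* φₙ(a*)) φₙ(a) xᵢ → 1`, which is fullness of the induced map at `a`.

Conversely, let `b = φₙ(a) ≥ 0` and `t = ∑ xᵢ b yᵢ` with `‖t - 1‖ ≤ 1/2`, so that `t + t* ≥ 1`.
For `wᵢ = yᵢ + xᵢ*` and `vᵢ = yᵢ - xᵢ*` polarization gives
`∑ wᵢ* b wᵢ - ∑ vᵢ* b vᵢ = 2 (t + t*)`, hence `S = ∑ wᵢ* b wᵢ ≥ 1`, and conjugating by `S^(-1/2)`,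
of norm `≤ 1`, yields an exact identity `∑ uᵢ* b uᵢ = 1` with `‖uᵢ‖ ≤ 2R`.
The numbers `N` and `2R` so obtained for each positive `a ≠ 0` are the function `T`.
-/

open Filter Topology
open scoped Matrix.Norms.L2Operator BigOperators

noncomputable instance (n : ℕ) : CStarAlgebra (Matrix (Fin n) (Fin n) ℂ) :=
  { Matrix.instL2OpNormedRing, Matrix.instCStarRing, Matrix.instL2OpNormedAlgebra with
    star_mul := fun a b => star_mul a b
    star_add := fun a b => star_add a b
    complete := CompleteSpace.complete
    star_smul := fun r a => star_smul r a }

/-- Complete positivity of a linear map between C*-algebras. -/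
def IsCompletelyPositive {A B : Type*} [CStarAlgebra A] [CStarAlgebra B] (φ : A →ₗ[ℂ] B) : Prop :=
  ∀ (n : ℕ) (a : Matrix (Fin n) (Fin n) A), (∃ b : Matrix (Fin n) (Fin n) A, a = star b * b) →
    ∃ c : Matrix (Fin n) (Fin n) B, a.map φ = star c * c

/-- Amenability (nuclearity), via the completely positive approximation property. -/
def IsNuclear (A : Type*) [CStarAlgebra A] : Prop :=
  ∀ (F : Finset A) (ε : ℝ), 0 < ε →
    ∃ (n : ℕ) (φ : A →ₗ[ℂ] Matrix (Fin n) (Fin n) ℂ) (ψ : Matrix (Fin n) (Fin n) ℂ →ₗ[ℂ] A),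
      IsCompletelyPositive φ ∧ IsCompletelyPositive ψ ∧
      (∀ a, ‖φ a‖ ≤ ‖a‖) ∧ (∀ m, ‖ψ m‖ ≤ ‖m‖) ∧ ∀ a ∈ F, ‖ψ (φ a) - a‖ < ε

/-- `(φₙ)` is a `T`-full (asymptotic) family: on each finite set `G` of nonzero
positive elements, eventually each `φₙ` is `T`-`G`-full. -/
def TFullFamily {A B : Type*} [CStarAlgebra A] [CStarAlgebra B]
    (T : A → ℕ × ℝ) (φ : ℕ → A →ₗ[ℂ] B) : Prop :=
  ∀ G : Finset A, (∀ a ∈ G, (∃ b : A, a = star b * b) ∧ a ≠ 0) →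
    ∃ N : ℕ, ∀ n ≥ N, ∀ a ∈ G, ∃ x : Fin (T a).1 → B,
      (∀ i, ‖x i‖ ≤ (T a).2) ∧ (∑ i, star (x i) * φ n a * x i) = 1

/-- Fullness of the induced homomorphism `A → ℓ^∞(B)/c₀(B)`. -/
def InducedMapFull {A B : Type*} [CStarAlgebra A] [CStarAlgebra B]
    (φ : ℕ → A →ₗ[ℂ] B) : Prop :=
  ∀ a : A, a ≠ 0 →
    ∃ (N : ℕ) (R : ℝ) (x y : ℕ → Fin N → B),
      (∀ n i, ‖x n i‖ ≤ R) ∧ (∀ n i, ‖y n i‖ ≤ R) ∧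
      Tendsto (fun n => ‖(∑ i, x n i * φ n a * y n i) - 1‖) atTop (nhds 0)


attribute [local instance] CStarAlgebra.spectralOrder CStarAlgebra.spectralOrderedRing

lemma sum_conj_add_star_sub_sum_conj_sub_star {R ι : Type*} [Ring R] [StarRing R] [Fintype ι]
    {b : R} (hb : IsSelfAdjoint b) (x y : ι → R) :
    ∑ i, star (y i + star (x i)) * b * (y i + star (x i))
      - ∑ i, star (y i - star (x i)) * b * (y i - star (x i))
      = 2 • (∑ i, x i * b * y i + star (∑ i, x i * b * y i)) := by
  simp only [star_sum, star_mul, hb.star_eq, star_add, star_sub, star_star,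
    ← Finset.sum_sub_distrib, two_smul, ← Finset.sum_add_distrib, mul_assoc]
  refine Finset.sum_congr rfl fun i _ => ?_
  noncomm_ring

lemma norm_sum_mul_mul_le {R ι : Type*} [NormedRing R] [Fintype ι] {x y : ι → R} {M : ℝ}
    (hx : ∀ i, ‖x i‖ ≤ M) (hy : ∀ i, ‖y i‖ ≤ M) (d : R) :
    ‖∑ i, x i * d * y i‖ ≤ Fintype.card ι * (M * M) * ‖d‖ := by
  calc ‖∑ i, x i * d * y i‖ ≤ ∑ i, ‖x i‖ * ‖d‖ * ‖y i‖ :=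
        norm_sum_le_of_le _ fun i _ => norm_mul₃_le
    _ ≤ ∑ _i : ι, M * ‖d‖ * M := by
        refine Finset.sum_le_sum fun i _ => ?_
        have hM : 0 ≤ M := (norm_nonneg _).trans (hx i)
        gcongr
        exacts [hx i, hy i]
    _ = Fintype.card ι * (M * M) * ‖d‖ := by
        rw [Finset.sum_const, Finset.card_univ, nsmul_eq_mul]
        ring

lemma exists_seq_norm_le_of_eventually {α ι E : Type*} [SeminormedAddCommGroup E] {l : Filter α}
    {R : ℝ} {P : α → (ι → E) → Prop}
    (h : ∀ᶠ n in l, ∃ x : ι → E, (∀ i, ‖x i‖ ≤ R) ∧ P n x) :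
    ∃ X : α → ι → E, (∀ n i, ‖X n i‖ ≤ max R 0) ∧ ∀ᶠ n in l, P n (X n) := by
  classical
  refine ⟨fun n => if hn : ∃ x : ι → E, (∀ i, ‖x i‖ ≤ R) ∧ P n x then hn.choose else 0,
    fun n i => ?_, h.mono fun n hn => ?_⟩
  · dsimp only
    split_ifs with hn
    · exact (hn.choose_spec.1 i).trans (le_max_left _ _)
    · simp
  · simpa [dif_pos hn] using hn.choose_spec.2

lemma tendsto_norm_sum_mul_mul_sub_one {α ι B : Type*} [NormedRing B] [Fintype ι] {l : Filter α}
    {x y : α → ι → B} {M : ℝ} (hx : ∀ n i, ‖x n i‖ ≤ M) (hy : ∀ n i, ‖y n i‖ ≤ M) {d e : α → B}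
    (hde : Tendsto (fun n => ‖d n - e n‖) l (𝓝 0))
    (hd : ∀ᶠ n in l, ∑ i, x n i * d n * y n i = 1) :
    Tendsto (fun n => ‖∑ i, x n i * e n * y n i - 1‖) l (𝓝 0) := by
  have hbound : Tendsto (fun n => Fintype.card ι * (M * M) * ‖d n - e n‖) l (𝓝 0) := by
    simpa using hde.const_mul (Fintype.card ι * (M * M))
  refine squeeze_zero' (.of_forall fun n => norm_nonneg _) ?_ hbound
  filter_upwards [hd] with n hn
  calc ‖∑ i, x n i * e n * y n i - 1‖ = ‖∑ i, x n i * (d n - e n) * y n i‖ := by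
        rw [← norm_neg, ← hn, neg_sub, ← Finset.sum_sub_distrib]
        simp only [mul_sub, sub_mul]
    _ ≤ _ := norm_sum_mul_mul_le (hx n) (hy n) _

lemma IsCompletelyPositive.exists_map_star_mul_self {A B : Type*} [CStarAlgebra A]
    [CStarAlgebra B] {φ : A →ₗ[ℂ] B} (hφ : IsCompletelyPositive φ) (a : A) :
    ∃ c : B, φ (star a * a) = star c * c := by
  obtain ⟨c, hc⟩ := hφ 1 (Matrix.of fun _ _ => star a * a) ⟨Matrix.of fun _ _ => a, by
    ext i j
    simp [Matrix.mul_apply, Matrix.star_apply]⟩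
  refine ⟨c 0 0, ?_⟩
  simpa [Matrix.mul_apply, Matrix.star_apply] using congrFun (congrFun hc 0) 0

lemma one_le_add_star_of_norm_sub_one_le {B : Type*} [CStarAlgebra B] {t : B}
    (ht : ‖t - 1‖ ≤ 1 / 2) : 1 ≤ t + star t := by
  set d := (1 - t) + (1 - star t)
  have hd : IsSelfAdjoint d := by
    simp only [isSelfAdjoint_iff, d, star_add, star_sub, star_one, star_star, add_comm]
  have hnorm : ‖d‖ ≤ 1 :=
    calc ‖d‖ ≤ ‖1 - t‖ + ‖star (1 - t)‖ := by simpa [d] using norm_add_le (1 - t) (star (1 - t))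
      _ ≤ 1 := by rw [norm_star, norm_sub_rev]; linarith
  nontriviality B
  have : d ≤ 1 := (CFC.le_one_iff d hd).mpr fun r hr =>
    (le_abs_self r).trans ((spectrum.norm_le_norm_of_mem hr).trans hnorm)
  have h2 : d = 1 + 1 - (t + star t) := by simp only [d]; abel
  rwa [h2, sub_le_comm, add_sub_cancel_right] at this

lemma exists_star_mul_mul_eq_one_of_one_le {B : Type*} [CStarAlgebra B] {S : B} (hS : 1 ≤ S) :
    ∃ c : B, ‖c‖ ≤ 1 ∧ star c * S * c = 1 := by
  have hSsa : IsSelfAdjoint S := .of_nonneg (zero_le_one.trans hS)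
  have hspec : ∀ r ∈ spectrum ℝ S, 1 ≤ r := (CFC.one_le_iff S hSsa).mp hS
  set f : ℝ → ℝ := fun r => (Real.sqrt r)⁻¹
  have hfc : ContinuousOn f (spectrum ℝ S) :=
    Real.continuous_sqrt.continuousOn.inv₀ fun r hr => by
      have := hspec r hr
      positivity
  refine ⟨cfc f S, ?_, ?_⟩
  · refine norm_cfc_le zero_le_one fun r hr => ?_
    have h1r : 1 ≤ Real.sqrt r := Real.one_le_sqrt.mpr (hspec r hr)
    rw [Real.norm_eq_abs, abs_of_nonneg (by positivity)]
    exact inv_le_one_of_one_le₀ h1r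
  · rw [(cfc_predicate f S).star_eq]
    nth_rw 2 [← cfc_id' ℝ S]
    rw [← cfc_mul .., ← cfc_mul .., ← cfc_const_one ℝ S]
    refine cfc_congr fun r hr => ?_
    have hr0 : 0 < r := zero_lt_one.trans_le (hspec r hr)
    have : Real.sqrt r ≠ 0 := (Real.sqrt_pos.mpr hr0).ne'
    simp only [f]
    field_simp
    exact (Real.sq_sqrt hr0.le).symm

lemma exists_sum_star_mul_mul_eq_one {ι B : Type*} [Fintype ι] [CStarAlgebra B] {b : B}
    (hb : 0 ≤ b) {x y : ι → B} {R : ℝ} (hx : ∀ i, ‖x i‖ ≤ R) (hy : ∀ i, ‖y i‖ ≤ R)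
    (h : ‖∑ i, x i * b * y i - 1‖ ≤ 1 / 2) :
    ∃ u : ι → B, (∀ i, ‖u i‖ ≤ 2 * R) ∧ ∑ i, star (u i) * b * u i = 1 := by
  set w : ι → B := fun i => y i + star (x i)
  set S := ∑ i, star (w i) * b * w i
  have hS : 1 ≤ S := by
    have hpol := sum_conj_add_star_sub_sum_conj_sub_star (.of_nonneg hb) x y
    have hdiff : 0 ≤ ∑ i, star (y i - star (x i)) * b * (y i - star (x i)) :=
      Finset.sum_nonneg fun i _ => star_left_conjugate_nonneg hb _
    have ht := one_le_add_star_of_norm_sub_one_le h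
    calc (1 : B) ≤ 2 • 1 := by simp [two_smul, zero_le_one]
      _ ≤ 2 • (∑ i, x i * b * y i + star (∑ i, x i * b * y i)) := by gcongr
      _ ≤ S := by rw [← hpol]; exact sub_le_self _ hdiff
  obtain ⟨c, hc, hcS⟩ := exists_star_mul_mul_eq_one_of_one_le hS
  refine ⟨fun i => w i * c, fun i => ?_, ?_⟩
  · calc ‖w i * c‖ ≤ ‖w i‖ * 1 := (norm_mul_le _ _).trans (by gcongr)
      _ ≤ ‖y i‖ + ‖x i‖ := by simpa [w] using norm_add_le (y i) (star (x i))
      _ ≤ 2 * R := by linarith [hx i, hy i]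
  · rw [← hcS, Finset.mul_sum, Finset.sum_mul]
    simp only [w, star_mul, mul_assoc]

lemma exists_tFullFamily_iff {A B : Type*} [CStarAlgebra A] [CStarAlgebra B]
    (φ : ℕ → A →ₗ[ℂ] B) :
    (∃ T : A → ℕ × ℝ, TFullFamily T φ) ↔ ∀ a : A, (∃ b : A, a = star b * b) → a ≠ 0 →
      ∃ (N : ℕ) (R : ℝ), ∀ᶠ n in atTop,
        ∃ x : Fin N → B, (∀ i, ‖x i‖ ≤ R) ∧ ∑ i, star (x i) * φ n a * x i = 1 := by
  constructor
  · rintro ⟨T, hT⟩ a hpos ha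
    obtain ⟨N, hN⟩ := hT {a} (by simpa using ⟨hpos, ha⟩)
    exact ⟨_, _, eventually_atTop.2 ⟨N, fun n hn => hN n hn a (Finset.mem_singleton_self a)⟩⟩
  · intro h
    choose! N R hNR using h
    refine ⟨fun a => (N a, R a), fun G hG => eventually_atTop.1 ?_⟩
    exact (eventually_all_finset G).2 fun a ha => hNR a (hG a ha).1 (hG a ha).2

lemma exists_approx_one_of_eventually_full {A B : Type*} [CStarAlgebra A] [CStarAlgebra B]
    {φ : ℕ → A →ₗ[ℂ] B} (hcontr : ∀ n (a : A), ‖φ n a‖ ≤ ‖a‖) {a : A}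
    (hmult : Tendsto (fun n => ‖φ n (star a * a) - φ n (star a) * φ n a‖) atTop (𝓝 0))
    {N : ℕ} {R : ℝ} (hfull : ∀ᶠ n in atTop,
      ∃ x : Fin N → B, (∀ i, ‖x i‖ ≤ R) ∧ ∑ i, star (x i) * φ n (star a * a) * x i = 1) :
    ∃ (R' : ℝ) (x y : ℕ → Fin N → B), (∀ n i, ‖x n i‖ ≤ R') ∧ (∀ n i, ‖y n i‖ ≤ R') ∧
      Tendsto (fun n => ‖(∑ i, x n i * φ n a * y n i) - 1‖) atTop (𝓝 0) := by
  obtain ⟨X, hX, hXsum⟩ := exists_seq_norm_le_of_eventually hfull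
  set M := max R 0
  have hM : 0 ≤ M := le_max_right _ _
  have hXM : ∀ n i, ‖X n i‖ ≤ M * (1 + ‖a‖) :=
    fun n i => (hX n i).trans (le_mul_of_one_le_right hM (by linarith [norm_nonneg a]))
  have hstarX : ∀ n i, ‖star (X n i) * φ n (star a)‖ ≤ M * (1 + ‖a‖) := fun n i =>
    (norm_mul_le _ _).trans <| by
      rw [norm_star]
      gcongr
      · exact hX n i
      · exact (hcontr n _).trans (by rw [norm_star]; linarith)
  refine ⟨M * (1 + ‖a‖), fun n i => star (X n i) * φ n (star a), X, hstarX, hXM, ?_⟩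
  have := tendsto_norm_sum_mul_mul_sub_one (fun n i => (norm_star (X n i)).trans_le (hXM n i))
    hXM hmult hXsum
  simpa only [mul_assoc] using this

theorem tfull_iff_induced_full_general {A B : Type*} [CStarAlgebra A] [CStarAlgebra B]
    (φ : ℕ → A →ₗ[ℂ] B)
    (hcp : ∀ n, IsCompletelyPositive (φ n)) (hcontr : ∀ n (a : A), ‖φ n a‖ ≤ ‖a‖)
    (hmult : ∀ a b : A, Tendsto (fun n => ‖φ n (a * b) - φ n a * φ n b‖) atTop (nhds 0)) :
    (∃ T : A → ℕ × ℝ, TFullFamily T φ) ↔ InducedMapFull φ := by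
  rw [exists_tFullFamily_iff]
  refine ⟨fun h a ha => ?_, fun h a hpos ha => ?_⟩
  · obtain ⟨N, R, hfull⟩ :=
      h (star a * a) ⟨a, rfl⟩ ((CStarRing.star_mul_self_ne_zero_iff a).2 ha)
    exact ⟨N, exists_approx_one_of_eventually_full hcontr (hmult _ _) hfull⟩
  · obtain ⟨N, R, x, y, hx, hy, hlim⟩ := h a ha
    refine ⟨N, 2 * R, ?_⟩
    filter_upwards [hlim.eventually (eventually_le_nhds one_half_pos)] with n hn
    obtain ⟨b, rfl⟩ := hpos
    obtain ⟨c, hc⟩ := (hcp n).exists_map_star_mul_self b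
    exact exists_sum_star_mul_mul_eq_one (hc ▸ star_mul_self_nonneg c) (hx n) (hy n) hn

theorem tfull_iff_induced_full {A B : Type*} [CStarAlgebra A] [CStarAlgebra B]
    [TopologicalSpace.SeparableSpace A] (hnuc : IsNuclear A)
    (φ : ℕ → A →ₗ[ℂ] B)
    (hcp : ∀ n, IsCompletelyPositive (φ n)) (hcontr : ∀ n (a : A), ‖φ n a‖ ≤ ‖a‖)
    (hmult : ∀ a b : A, Tendsto (fun n => ‖φ n (a * b) - φ n a * φ n b‖) atTop (nhds 0)) :
    (∃ T : A → ℕ × ℝ, TFullFamily T φ) ↔ InducedMapFull φ :=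
  tfull_iff_induced_full_general φ hcp hcontr hmult
end

section
/- Let A be a unital AH-algebra and B a unital simple AF-algebra (or more generally a unital separable simple C*-algebra of tracial rank zero). Let C = lim(Aₙ, φₙ) be an inductive limit presentation of A with injective connecting maps φₙ, and suppose the approximate-unitary-equivalence uniqueness theorem holds for each building block Aₙ: any two monomorphisms from Aₙ to B agreeing on KL and on traces are approximately unitarily equivalent. Then any two unital monomorphisms h₁, h₂ : A → B with [h₁] = [h₂] in KL(A, B) and τ∘h₁ = τ∘h₂ for all tracial states τ of B are approximately unitarily equivalent: there exist unitaries uₙ ∈ B with ‖uₙ* h₁(f) uₙ − h₂(f)‖ → 0 for all f ∈ A. -/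
/-!
STATEMENT 14: Let `A` be a unital AH-algebra, presented as the closure of an
increasing union of building-block subalgebras `Aₙ` (injective connecting maps), and
let `B` be a unital simple AF-algebra (more generally, of tracial rank zero).
Assume the uniqueness theorem holds for each building block: any two injective
unital *-homomorphisms `Aₙ → B` agreeing on `KL` and on traces are approximately
unitarily equivalent.  Then any two unital monomorphisms `h₁, h₂ : A → B` with
`[h₁] = [h₂]` in `KL(A,B)` and `τ∘h₁ = τ∘h₂` for all tracial states `τ` are
approximately unitarily equivalent.  (The `KL`-invariant is abstracted as a given
assignment `KL n` on homomorphisms from the building blocks.)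
-/

open scoped ComplexOrder

/-- A tracial state. -/
def IsTracialState {B : Type*} [CStarAlgebra B] (τ : B →ₗ[ℂ] ℂ) : Prop :=
  τ 1 = 1 ∧ (∀ a b : B, τ (a * b) = τ (b * a)) ∧ ∀ a : B, 0 ≤ τ (star a * a)

/-- A unital C*-algebra is AF if it is the closure of an increasing union of
finite-dimensional C*-subalgebras. -/
def IsAFAlgebra (A : Type*) [CStarAlgebra A] : Prop :=
  ∃ S : ℕ → StarSubalgebra ℂ A, Monotone S ∧ (∀ n, FiniteDimensional ℂ (S n)) ∧
    Dense (⋃ n, (S n : Set A))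

/-- A C*-algebra is simple if it has no nontrivial closed two-sided ideals. -/
def IsSimpleCStarAlgebra (A : Type*) [CStarAlgebra A] : Prop :=
  (∃ a : A, a ≠ 0) ∧ ∀ I : TwoSidedIdeal A, IsClosed (I : Set A) → I = ⊥ ∨ I = ⊤

theorem uniqueness_by_inductive_limit
    {A B : Type*} [CStarAlgebra A] [CStarAlgebra B]
    (hB_AF : IsAFAlgebra B) (hB_simple : IsSimpleCStarAlgebra B)
    -- the inductive limit presentation of `A` with injective connecting maps
    (S : ℕ → StarSubalgebra ℂ A) (hmono : Monotone S) (hdense : Dense (⋃ n, (S n : Set A)))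
    -- the (abstracted) `KL`-invariant on homomorphisms from the building blocks
    (KLtype : ℕ → Type*) (KL : ∀ n, ((S n) →⋆ₐ[ℂ] B) → KLtype n)
    -- the building-block uniqueness theorem
    (hblock : ∀ (n : ℕ) (g₁ g₂ : (S n) →⋆ₐ[ℂ] B),
      Function.Injective g₁ → Function.Injective g₂ →
      KL n g₁ = KL n g₂ →
      (∀ τ : B →ₗ[ℂ] ℂ, IsTracialState τ → ∀ x : S n, τ (g₁ x) = τ (g₂ x)) →
      ∀ ε : ℝ, 0 < ε → ∀ F : Finset (S n),
        ∃ u ∈ unitary B, ∀ f ∈ F, ‖star u * g₁ f * u - g₂ f‖ < ε)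
    (h₁ h₂ : A →⋆ₐ[ℂ] B)
    (hinj₁ : Function.Injective h₁) (hinj₂ : Function.Injective h₂)
    -- `[h₁] = [h₂]` in `KL(A, B)`, expressed on each building block
    (hKL : ∀ n, KL n (h₁.comp (S n).subtype) = KL n (h₂.comp (S n).subtype))
    -- `τ ∘ h₁ = τ ∘ h₂` for all tracial states
    (htr : ∀ τ : B →ₗ[ℂ] ℂ, IsTracialState τ → ∀ a : A, τ (h₁ a) = τ (h₂ a)) :
    ∀ ε : ℝ, 0 < ε → ∀ F : Finset A,
      ∃ u ∈ unitary B, ∀ f ∈ F, ‖star u * h₁ f * u - h₂ f‖ < ε := by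
  intro ε hε F
  -- approximate each element of `F` by an element of some `S n`
  have happrox : ∀ f : A, ∃ n : ℕ, ∃ a : S n, ‖f - (a : A)‖ < ε / 3 := by
    intro f
    obtain ⟨a, ha, hab⟩ := Metric.dense_iff.mp hdense f (ε / 3) (by linarith)
    obtain ⟨m, hat⟩ := Set.mem_iUnion.mp hab
    exact ⟨m, ⟨a, hat⟩, by simpa [dist_eq_norm, norm_sub_rev] using ha⟩
  choose N a ha using happrox
  set n : ℕ := F.sup N with hn
  -- push the approximants into the common building block `S n`
  have hsub : ∀ f ∈ F, ((a f : A)) ∈ S n := fun f hf =>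
    hmono (Finset.le_sup hf) (a f).2
  classical
  let b : {f // f ∈ F} → S n := fun f => ⟨(a f : A), hsub f f.2⟩
  let F' : Finset (S n) := F.attach.image b
  set g₁ : (S n) →⋆ₐ[ℂ] B := h₁.comp (S n).subtype with hg₁
  set g₂ : (S n) →⋆ₐ[ℂ] B := h₂.comp (S n).subtype with hg₂
  have hginj₁ : Function.Injective g₁ := hinj₁.comp Subtype.val_injective
  have hginj₂ : Function.Injective g₂ := hinj₂.comp Subtype.val_injective
  have hgtr : ∀ τ : B →ₗ[ℂ] ℂ, IsTracialState τ → ∀ x : S n, τ (g₁ x) = τ (g₂ x) :=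
    fun τ hτ x => htr τ hτ x
  obtain ⟨u, hu, hval⟩ := hblock n g₁ g₂ hginj₁ hginj₂ (hKL n) hgtr (ε / 3)
    (by linarith) F'
  refine ⟨u, hu, fun f hf => ?_⟩
  have hbf : b ⟨f, hf⟩ ∈ F' := Finset.mem_image_of_mem b (Finset.mem_attach _ _)
  have hmid := hval _ hbf
  have h1a : g₁ (b ⟨f, hf⟩) = h₁ (a f) := rfl
  have h2a : g₂ (b ⟨f, hf⟩) = h₂ (a f) := rfl
  rw [h1a, h2a] at hmid
  have hcontr₁ : ‖h₁ (f - (a f : A))‖ ≤ ‖f - (a f : A)‖ :=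
    NonUnitalStarAlgHom.norm_apply_le h₁ _
  have hcontr₂ : ‖h₂ ((a f : A) - f)‖ ≤ ‖(a f : A) - f‖ :=
    NonUnitalStarAlgHom.norm_apply_le h₂ _
  have hustar : star u ∈ unitary B := Unitary.star_mem hu
  have hconj : ‖star u * (h₁ f - h₁ (a f : A)) * u‖ = ‖h₁ f - h₁ (a f : A)‖ := by
    rw [CStarRing.norm_mul_mem_unitary _ hu, CStarRing.norm_mem_unitary_mul _ hustar]
  have key : star u * h₁ f * u - h₂ f =
      (star u * (h₁ f - h₁ (a f : A)) * u) + (star u * h₁ (a f : A) * u - h₂ (a f : A))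
        + (h₂ (a f : A) - h₂ f) := by noncomm_ring
  calc ‖star u * h₁ f * u - h₂ f‖
      ≤ ‖star u * (h₁ f - h₁ (a f : A)) * u‖
          + ‖star u * h₁ (a f : A) * u - h₂ (a f : A)‖ + ‖h₂ (a f : A) - h₂ f‖ := by
        rw [key]; exact norm_add₃_le
    _ < ε / 3 + ε / 3 + ε / 3 := by
        refine add_lt_add (add_lt_add_of_le_of_lt ?_ hmid) ?_
        · rw [hconj]
          calc ‖h₁ f - h₁ (a f : A)‖ = ‖h₁ (f - (a f : A))‖ := by rw [map_sub]
            _ ≤ ‖f - (a f : A)‖ := hcontr₁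
            _ ≤ ε / 3 := le_of_lt (ha f)
        · calc ‖h₂ (a f : A) - h₂ f‖ = ‖h₂ ((a f : A) - f)‖ := by rw [map_sub]
            _ ≤ ‖(a f : A) - f‖ := hcontr₂
            _ < ε / 3 := by rw [norm_sub_rev]; exact ha f
    _ = ε := by ring
end
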